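/- arXiv:1911.09146 — 2 statements merged into one kernel-verified Lean document; each statement's English description precedes it below -/
import Mathlib

section
/- Non-emptiness of the two-robot deadlock set: let p_{d1}, p_{d2} ∈ ℝ² be distinct goals with D_G = ‖p_{d2} − p_{d1}‖ > D_s > 0, let ê = (p_{d2} − p_{d1})/D_G, and for α ∈ (0,1) set p₁* = α p_{d1} + (1−α) p_{d2} and p₂* = p₁* − D_s ê. Then with û₁ = −k_p(p₁* − p_{d1}) there exists μ₁ = 2k_p(1−α)D_G/D_s > 0 such that û₁ = (1/2)μ₁ a₁ where a₁ = −(p₁* − p₂*); moreover ‖p₁* − p₂*‖ = D_s and p₁* ≠ p_{d1}. -/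
/-- Non-emptiness of the two-robot deadlock set. With distinct goals,
D_G = ‖p_{d2} − p_{d1}‖ > D_s > 0, ê = (p_{d2} − p_{d1})/D_G, α ∈ (0,1),
p₁* = α p_{d1} + (1−α) p_{d2}, p₂* = p₁* − D_s ê and û₁ = −k_p(p₁* − p_{d1}),
the multiplier μ₁ = 2k_p(1−α)D_G/D_s is positive and û₁ = (1/2)μ₁ a₁ with
a₁ = −(p₁* − p₂*); moreover ‖p₁* − p₂*‖ = D_s and p₁* ≠ p_{d1}. -/
theorem stmt_5 (pd₁ pd₂ : EuclideanSpace ℝ (Fin 2)) (kp Ds α : ℝ)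
    (hkp : 0 < kp) (hDs : 0 < Ds) (hα : α ∈ Set.Ioo (0 : ℝ) 1)
    (hgoals : pd₁ ≠ pd₂) (DG : ℝ) (hDG : DG = ‖pd₂ - pd₁‖) (hDGDs : Ds < DG)
    (e p₁ p₂ : EuclideanSpace ℝ (Fin 2))
    (he : e = DG⁻¹ • (pd₂ - pd₁))
    (hp₁ : p₁ = α • pd₁ + (1 - α) • pd₂)
    (hp₂ : p₂ = p₁ - Ds • e) :
    ∃ μ₁ : ℝ, μ₁ = 2 * kp * (1 - α) * DG / Ds ∧ 0 < μ₁ ∧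
      (-kp) • (p₁ - pd₁) = (1 / 2 : ℝ) • (μ₁ • (-(p₁ - p₂))) ∧
      ‖p₁ - p₂‖ = Ds ∧ p₁ ≠ pd₁ := by
  obtain ⟨hα0, hα1⟩ := hα
  have hv : pd₂ - pd₁ ≠ 0 := sub_ne_zero.mpr hgoals.symm
  have hDGpos : 0 < DG := hDs.trans hDGDs
  have hDGne : DG ≠ 0 := ne_of_gt hDGpos
  have h1α : 0 < 1 - α := by linarith
  have hdiff12 : p₁ - p₂ = (Ds / DG) • (pd₂ - pd₁) := by
    rw [hp₂, he]; rw [div_eq_mul_inv, mul_smul]; abel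
  have hdiff1d : p₁ - pd₁ = (1 - α) • (pd₂ - pd₁) := by
    rw [hp₁]
    module
  refine ⟨2 * kp * (1 - α) * DG / Ds, rfl, by positivity, ?_, ?_, ?_⟩
  · rw [hdiff12, hdiff1d, ← neg_smul, smul_smul, smul_smul, smul_smul]
    congr 1
    field_simp
  · rw [hdiff12, norm_smul, ← hDG, Real.norm_eq_abs,
      abs_of_pos (div_pos hDs hDGpos)]
    field_simp
  · intro h
    rw [h, sub_self] at hdiff1d
    rcases smul_eq_zero.mp hdiff1d.symm with h' | h'
    · linarith
    · exact hv h'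
end

section
/- Three-robot equilateral deadlock (Category A): let p_{di} = R·ê_{2π(i−1)/3} for i = 1,2,3 with R > 0, and p_i* = (D_s/√3)·ê_{2π(i−1)/3 + π}. Then ‖p_i* − p_j*‖ = D_s for all i ≠ j, and for each i there exist μ_{ij} > 0 (j ≠ i) such that −k_p(p_i* − p_{di}) = −(1/2)∑_{j≠i} μ_{ij}(p_i* − p_j*). -/
set_option maxHeartbeats 1000000

/-- Three-robot equilateral deadlock (Category A): with goals
p_{di} = R·ê_{2πi/3} and positions p_i* = (D_s/√3)·ê_{2πi/3 + π} (i = 0,1,2,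
ê_θ = (cos θ, sin θ)), the robots are pairwise at distance D_s and for each i there
exist positive multipliers μ_{ij} balancing the goal-attraction force:
−k_p(p_i* − p_{di}) = −(1/2)∑_{j≠i} μ_{ij}(p_i* − p_j*). -/
theorem stmt_9 (kp Ds R : ℝ) (hkp : 0 < kp) (hDs : 0 < Ds) (hR : 0 < R)
    (e : ℝ → EuclideanSpace ℝ (Fin 2))
    (he : ∀ θ, e θ = ![Real.cos θ, Real.sin θ])
    (pd p : Fin 3 → EuclideanSpace ℝ (Fin 2))
    (hpd : ∀ i : Fin 3, pd i = R • e (2 * Real.pi * (i : ℝ) / 3))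
    (hp : ∀ i : Fin 3, p i = (Ds / Real.sqrt 3) • e (2 * Real.pi * (i : ℝ) / 3 + Real.pi)) :
    (∀ i j : Fin 3, i ≠ j → ‖p i - p j‖ = Ds) ∧
      ∀ i : Fin 3, ∃ μ : Fin 3 → ℝ,
        (∀ j ∈ Finset.univ.erase i, 0 < μ j) ∧
        (-kp) • (p i - pd i) =
          -((1 / 2 : ℝ) • ∑ j ∈ Finset.univ.erase i, μ j • (p i - p j)) := by
  have hm : Real.sqrt 3 * Real.sqrt 3 = 3 := Real.mul_self_sqrt (by norm_num)
  have h3 : Real.sqrt 3 ≠ 0 := by positivity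
  have h3p : (0:ℝ) < Real.sqrt 3 := by positivity
  have e2 : Real.sqrt 3 ^ 2 = 3 := Real.sq_sqrt (by norm_num)
  have e3 : Real.sqrt 3 ^ 3 = 3 * Real.sqrt 3 := by
    rw [pow_succ, e2]
  have e4 : Real.sqrt 3 ^ 4 = 9 := by
    rw [show (4:ℕ) = 2*2 from rfl, pow_mul, e2]; norm_num
  have e5 : Real.sqrt 3 ^ 5 = 9 * Real.sqrt 3 := by
    rw [pow_succ, e4]
  -- component formulas for p
  have h0 : p 0 = (!₂[-(Ds/Real.sqrt 3), 0] : EuclideanSpace ℝ (Fin 2)) := by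
    rw [hp]
    ext x
    fin_cases x <;> simp [he, Real.cos_pi, Real.sin_pi, PiLp.smul_apply, smul_eq_mul]
  have h1 : p 1 = (!₂[Ds/Real.sqrt 3/2, -(Ds/2)] : EuclideanSpace ℝ (Fin 2)) := by
    have harg : 2 * Real.pi * ((1:Fin 3) : ℝ) / 3 + Real.pi = (Real.pi - Real.pi/3) + Real.pi := by
      norm_num; ring
    rw [hp, harg]
    ext x
    simp only [PiLp.smul_apply, he]
    rw [ Real.cos_add_pi, Real.sin_add_pi, Real.cos_pi_sub, Real.sin_pi_sub,
      Real.cos_pi_div_three, Real.sin_pi_div_three]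
    fin_cases x <;> simp [PiLp.smul_apply, smul_eq_mul] <;> field_simp
  have h2 : p 2 = (!₂[Ds/Real.sqrt 3/2, Ds/2] : EuclideanSpace ℝ (Fin 2)) := by
    have harg : 2 * Real.pi * ((2:Fin 3) : ℝ) / 3 + Real.pi
        = (Real.pi/3 + Real.pi) + Real.pi := by
      norm_num; ring
    rw [hp, harg]
    ext x
    simp only [PiLp.smul_apply, he]
    rw [ Real.cos_add_pi, Real.sin_add_pi, Real.cos_add_pi, Real.sin_add_pi,
      Real.cos_pi_div_three, Real.sin_pi_div_three]
    fin_cases x <;> simp [PiLp.smul_apply, smul_eq_mul] <;> field_simp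
  have e5 : Real.sqrt 3 ^ 5 = 9 * Real.sqrt 3 := by
    rw [pow_succ, e4]
  -- component formulas for pd
  have hd0 : pd 0 = (!₂[R, 0] : EuclideanSpace ℝ (Fin 2)) := by
    rw [hpd]
    ext x
    fin_cases x <;> simp [he, Real.cos_zero, Real.sin_zero, PiLp.smul_apply, smul_eq_mul]
  have hd1 : pd 1 = (!₂[-(R/2), R*Real.sqrt 3/2] : EuclideanSpace ℝ (Fin 2)) := by
    have harg : 2 * Real.pi * ((1:Fin 3) : ℝ) / 3 = Real.pi - Real.pi/3 := by
      norm_num; ring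
    rw [hpd, harg]
    ext x
    simp only [PiLp.smul_apply, he]
    rw [ Real.cos_pi_sub, Real.sin_pi_sub,
      Real.cos_pi_div_three, Real.sin_pi_div_three]
    fin_cases x <;> simp [PiLp.smul_apply, smul_eq_mul] <;> ring
  have hd2 : pd 2 = (!₂[-(R/2), -(R*Real.sqrt 3/2)] : EuclideanSpace ℝ (Fin 2)) := by
    have harg : 2 * Real.pi * ((2:Fin 3) : ℝ) / 3 = Real.pi/3 + Real.pi := by
      norm_num; ring
    rw [hpd, harg]
    ext x
    simp only [PiLp.smul_apply, he]
    rw [ Real.cos_add_pi, Real.sin_add_pi,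
      Real.cos_pi_div_three, Real.sin_pi_div_three]
    fin_cases x <;> simp [PiLp.smul_apply, smul_eq_mul] <;> ring
  have nrm : ∀ v : EuclideanSpace ℝ (Fin 2), v 0 ^ 2 + v 1 ^ 2 = Ds ^ 2 → ‖v‖ = Ds := by
    intro v hv
    rw [EuclideanSpace.norm_eq]
    simp only [Real.norm_eq_abs, sq_abs, Fin.sum_univ_two]
    rw [hv, Real.sqrt_sq hDs.le]
  have nsub : ∀ u v : EuclideanSpace ℝ (Fin 2),
      (u 0 - v 0) ^ 2 + (u 1 - v 1) ^ 2 = Ds ^ 2 → ‖u - v‖ = Ds := by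
    intro u v huv
    apply nrm
    simpa [PiLp.sub_apply] using huv
  have d01 : ‖p 0 - p 1‖ = Ds := by
    apply nsub
    rw [h0, h1]
    simp only [PiLp.toLp_apply, Matrix.cons_val_zero, Matrix.cons_val_one, Matrix.head_cons]
    field_simp
    nlinarith [hm]
  have d02 : ‖p 0 - p 2‖ = Ds := by
    apply nsub
    rw [h0, h2]
    simp only [PiLp.toLp_apply, Matrix.cons_val_zero, Matrix.cons_val_one, Matrix.head_cons]
    field_simp
    nlinarith [hm]
  have d12 : ‖p 1 - p 2‖ = Ds := by
    apply nsub
    rw [h1, h2]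
    simp only [PiLp.toLp_apply, Matrix.cons_val_zero, Matrix.cons_val_one, Matrix.head_cons]
    field_simp
    nlinarith [hm]
  have d10 : ‖p 1 - p 0‖ = Ds := by rw [norm_sub_rev]; exact d01
  have d20 : ‖p 2 - p 0‖ = Ds := by rw [norm_sub_rev]; exact d02
  have d21 : ‖p 2 - p 1‖ = Ds := by rw [norm_sub_rev]; exact d12
  set c : ℝ := 2 * kp * (Ds / Real.sqrt 3 + R) / (Real.sqrt 3 * Ds) with hc
  have hcpos : 0 < c := by positivity
  have he0 : (Finset.univ.erase (0 : Fin 3)) = {1, 2} := by decide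
  have he1 : (Finset.univ.erase (1 : Fin 3)) = {0, 2} := by decide
  have he2 : (Finset.univ.erase (2 : Fin 3)) = {0, 1} := by decide
  have F : ∀ i : Fin 3, ∃ μ : Fin 3 → ℝ,
      (∀ j ∈ Finset.univ.erase i, 0 < μ j) ∧
      (-kp) • (p i - pd i) =
        -((1 / 2 : ℝ) • ∑ j ∈ Finset.univ.erase i, μ j • (p i - p j)) := by
    intro i
    refine ⟨fun _ => c, fun j _ => hcpos, ?_⟩
    fin_cases i
    · rw [show ((⟨0, by norm_num⟩ : Fin 3)) = 0 from rfl, he0,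
        Finset.sum_pair (by decide : (1:Fin 3) ≠ 2)]
      ext x
      fin_cases x <;>
        · simp only [h0, h1, h2, hd0, PiLp.smul_apply, PiLp.sub_apply,
            PiLp.add_apply, PiLp.neg_apply, Matrix.cons_val_zero, Matrix.cons_val_one,
            Matrix.head_cons, smul_eq_mul, hc, PiLp.toLp_apply, Fin.zero_eta, Fin.mk_one]
          field_simp
          try ring_nf
          try simp only [e2, e3, e4, e5]
          try ring_nf
          try linarith
    · rw [show ((⟨1, by norm_num⟩ : Fin 3)) = 1 from rfl, he1,
        Finset.sum_pair (by decide : (0:Fin 3) ≠ 2)]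
      ext x
      fin_cases x <;>
        · simp only [h0, h1, h2, hd1, PiLp.smul_apply, PiLp.sub_apply,
            PiLp.add_apply, PiLp.neg_apply, Matrix.cons_val_zero, Matrix.cons_val_one,
            Matrix.head_cons, smul_eq_mul, hc, PiLp.toLp_apply, Fin.zero_eta, Fin.mk_one]
          field_simp
          try ring_nf
          try simp only [e2, e3, e4, e5]
          try ring_nf
          try linarith
    · rw [show ((⟨2, by norm_num⟩ : Fin 3)) = 2 from rfl, he2,
        Finset.sum_pair (by decide : (0:Fin 3) ≠ 1)]
      ext x
      fin_cases x <;>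
        · simp only [h0, h1, h2, hd2, PiLp.smul_apply, PiLp.sub_apply,
            PiLp.add_apply, PiLp.neg_apply, Matrix.cons_val_zero, Matrix.cons_val_one,
            Matrix.head_cons, smul_eq_mul, hc, PiLp.toLp_apply, Fin.zero_eta, Fin.mk_one]
          field_simp
          try ring_nf
          try simp only [e2, e3, e4, e5]
          try ring_nf
          try linarith
  refine ⟨?_, F⟩
  intro i j hij
  fin_cases i <;> fin_cases j <;>
    first
    | exact absurd rfl hij
    | exact d01 | exact d02 | exact d12 | exact d10 | exact d20 | exact d21
end
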